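/- arXiv:2009.04856 — 2 statements merged into one kernel-verified Lean document; each statement's English description precedes it below -/
import Mathlib

section
/- Let α > 0 and let X be a non-negative absolutely continuous random variable with cumulative distribution function F, differentiable on (0, +∞) with derivative f, satisfying 0 < F(x) < 1 for all x > 0, lim_{x→0⁺} F(x) = 0 and lim_{x→+∞} F(x) = 1. Then for every a > 0 the α-generalized reversed aging intensity L̆_α of X satisfies: (1) 0 ≤ L̆_α(x) < +∞ for all x > 0; (2) lim_{x→0⁺} ∫_x^a L̆_α(t)/t dt < +∞; (3) lim_{x→+∞} ∫_a^x L̆_α(t)/t dt = +∞. -/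
/-!
On `(0, ∞)` the function `t ↦ L̆_α(t) / t = α F(t)^(α-1) f(t) / (1 - F(t)^α)` is the derivative of
`G = -log (1 - F^α)`. It is nonnegative because `F` is monotone, so it is automatically integrable
and `∫_u^v L̆_α(t)/t dt = G v - G u`. As `x → 0⁺`, `F^α → 0` and `G → 0`; as `x → ∞`, `F^α → 1⁻`
and `G → +∞`.
-/

/-- The α-generalized reversed aging intensity function. -/
noncomputable def genRAI (F f : ℝ → ℝ) (α x : ℝ) : ℝ :=
  if α = 0 then -(x * f x) / (F x * Real.log (F x))
  else α * x * F x ^ (α - 1) * f x / (1 - F x ^ α)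

open Real Filter Set Topology

theorem intervalIntegral.integral_eq_sub_of_hasDerivAt_of_nonneg {G g : ℝ → ℝ} {a b : ℝ}
    (hderiv : ∀ x ∈ uIcc a b, HasDerivAt G (g x) x) (hpos : ∀ x ∈ uIcc a b, 0 ≤ g x) :
    ∫ x in a..b, g x = G b - G a :=
  integral_eq_sub_of_hasDerivAt hderiv <|
    intervalIntegrable_deriv_of_nonneg (HasDerivAt.continuousOn hderiv)
      (fun x hx => hderiv x (Ioo_subset_Icc_self hx)) (fun x hx => hpos x (Ioo_subset_Icc_self hx))

theorem tendsto_neg_log_one_sub_atTop {ι : Type*} {l : Filter ι} {g : ι → ℝ}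
    (hg : Tendsto g l (𝓝[<] 1)) : Tendsto (fun i => -log (1 - g i)) l atTop := by
  have hsub : Tendsto (fun i => 1 - g i) l (𝓝[>] 0) := by
    refine tendsto_nhdsWithin_of_tendsto_nhds_of_eventually_within _ ?_ ?_
    · simpa using (hg.mono_right nhdsWithin_le_nhds).const_sub 1
    · filter_upwards [hg self_mem_nhdsWithin] with i (hi : g i < 1)
      exact sub_pos.2 hi
  exact tendsto_neg_atBot_atTop.comp (tendsto_log_nhdsGT_zero.comp hsub)

section ReversedAgingIntensity

variable {F f : ℝ → ℝ} {α x : ℝ}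

theorem genRAI_div_self (hα : α ≠ 0) (hx : x ≠ 0) :
    genRAI F f α x / x = α * F x ^ (α - 1) * f x / (1 - F x ^ α) := by
  rw [genRAI, if_neg hα]
  field_simp

theorem genRAI_nonneg (hα : 0 < α) (hF : 0 < F x ∧ F x < 1) (hx : 0 ≤ x) (hf : 0 ≤ f x) :
    0 ≤ genRAI F f α x := by
  rw [genRAI, if_neg hα.ne']
  have : F x ^ α < 1 := rpow_lt_one hF.1.le hF.2 hα
  have := rpow_nonneg hF.1.le (α - 1)
  apply div_nonneg _ (by linarith)
  positivity

theorem HasDerivAt.neg_log_one_sub_rpow {f' : ℝ} (hF : HasDerivAt F f' x) (h0 : F x ≠ 0)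
    (h1 : F x ^ α ≠ 1) :
    HasDerivAt (fun y => -Real.log (1 - F y ^ α)) (α * F x ^ (α - 1) * f' / (1 - F x ^ α)) x := by
  have h1' : 1 - F x ^ α ≠ 0 := sub_ne_zero.2 h1.symm
  refine (HasDerivAt.log ((hF.rpow_const (p := α) (Or.inl h0)).const_sub 1) h1').neg.congr_deriv ?_
  field_simp

theorem integral_genRAI_div_self (hα : 0 < α) (hd : ∀ x ∈ Ioi (0:ℝ), HasDerivAt F (f x) x)
    (hF : ∀ x ∈ Ioi (0:ℝ), 0 < F x ∧ F x < 1) (hf : ∀ x ∈ Ioi (0:ℝ), 0 ≤ f x) {u v : ℝ}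
    (hu : 0 < u) (hv : 0 < v) :
    ∫ t in u..v, genRAI F f α t / t = -log (1 - F v ^ α) - -log (1 - F u ^ α) := by
  have hpos : ∀ t ∈ uIcc u v, 0 < t := fun t ht => lt_of_lt_of_le (lt_min hu hv) ht.1
  refine intervalIntegral.integral_eq_sub_of_hasDerivAt_of_nonneg
    (G := fun x => -log (1 - F x ^ α)) (fun t ht => ?_) (fun t ht => ?_)
  · obtain ⟨h0, h1⟩ := hF t (hpos t ht)
    rw [genRAI_div_self hα.ne' (hpos t ht).ne']
    exact (hd t (hpos t ht)).neg_log_one_sub_rpow h0.ne' (rpow_lt_one h0.le h1 hα).ne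
  · have ht := hpos t ht
    exact div_nonneg (genRAI_nonneg hα (hF t ht) ht.le (hf t ht)) ht.le

end ReversedAgingIntensity

theorem stmt_9_general (α : ℝ) (hα : 0 < α) (F f : ℝ → ℝ)
    (hmono : Monotone F)
    (hd : ∀ x ∈ Set.Ioi (0:ℝ), HasDerivAt F (f x) x)
    (hF : ∀ x ∈ Set.Ioi (0:ℝ), 0 < F x ∧ F x < 1)
    (hF0 : Filter.Tendsto F (nhdsWithin (0:ℝ) (Set.Ioi 0)) (nhds 0))
    (hF1 : Filter.Tendsto F Filter.atTop (nhds 1))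
    (a : ℝ) (ha : 0 < a) :
    (∀ x > (0:ℝ), 0 ≤ genRAI F f α x) ∧
    (∃ c : ℝ, Filter.Tendsto (fun x => ∫ t in x..a, genRAI F f α t / t)
      (nhdsWithin (0:ℝ) (Set.Ioi 0)) (nhds c)) ∧
    Filter.Tendsto (fun x => ∫ t in a..x, genRAI F f α t / t)
      Filter.atTop Filter.atTop := by
  set G : ℝ → ℝ := fun x => -log (1 - F x ^ α)
  have hf : ∀ x > 0, 0 ≤ f x := fun x hx => (hd x hx).deriv ▸ hmono.deriv_nonneg
  have hint {u v : ℝ} (hu : 0 < u) (hv : 0 < v) : ∫ t in u..v, genRAI F f α t / t = G v - G u :=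
    integral_genRAI_div_self hα hd hF hf hu hv
  refine ⟨fun x hx => genRAI_nonneg hα (hF x hx) hx.le (hf x hx), ⟨G a, ?_⟩, ?_⟩
  · have hG0 : Tendsto G (𝓝[>] 0) (𝓝 0) := by
      have hcont : ContinuousAt (fun y : ℝ => -log (1 - y ^ α)) 0 :=
        ((continuousAt_const.sub (continuousAt_rpow_const 0 α (Or.inr hα.le))).log
          (by simp [zero_rpow hα.ne'])).neg
      simpa [zero_rpow hα.ne', Function.comp_def] using hcont.tendsto.comp hF0
    refine (by simpa using tendsto_const_nhds.sub hG0 : Tendsto (fun x => G a - G x) _ _).congr' ?_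
    filter_upwards [self_mem_nhdsWithin] with x hx
    exact (hint hx ha).symm
  · have hF1' : Tendsto (fun x => F x ^ α) atTop (𝓝[<] 1) := by
      refine tendsto_nhdsWithin_of_tendsto_nhds_of_eventually_within _ ?_ ?_
      · simpa [Function.comp_def] using
          (continuousAt_rpow_const 1 α (Or.inl one_ne_zero)).tendsto.comp hF1
      · filter_upwards [eventually_gt_atTop 0] with x hx
        exact rpow_lt_one (hF x hx).1.le (hF x hx).2 hα
    refine (tendsto_atTop_add_const_right _ (-G a) (tendsto_neg_log_one_sub_atTop hF1')).congr' ?_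
    filter_upwards [eventually_gt_atTop 0] with x hx
    exact (hint ha hx).symm

/-- For `α > 0`, the α-generalized reversed aging intensity `L̆_α` of a non-negative
absolutely continuous random variable satisfies: (1) `0 ≤ L̆_α(x) < ∞` for all `x > 0`;
(2) `∫_x^a L̆_α(t)/t dt` converges to a finite limit as `x → 0⁺`;
(3) `∫_a^x L̆_α(t)/t dt → +∞` as `x → +∞`. -/
theorem stmt_9 (α : ℝ) (hα : 0 < α) (F f : ℝ → ℝ)
    (hmono : Monotone F)
    (hd : ∀ x ∈ Set.Ioi (0:ℝ), HasDerivAt F (f x) x)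
    (hF : ∀ x ∈ Set.Ioi (0:ℝ), 0 < F x ∧ F x < 1)
    (hfi : ∀ u v : ℝ, 0 < u → 0 < v → IntervalIntegrable f MeasureTheory.volume u v)
    (hF0 : Filter.Tendsto F (nhdsWithin (0:ℝ) (Set.Ioi 0)) (nhds 0))
    (hF1 : Filter.Tendsto F Filter.atTop (nhds 1))
    (a : ℝ) (ha : 0 < a) :
    (∀ x > (0:ℝ), 0 ≤ genRAI F f α x) ∧
    (∃ c : ℝ, Filter.Tendsto (fun x => ∫ t in x..a, genRAI F f α t / t)
      (nhdsWithin (0:ℝ) (Set.Ioi 0)) (nhds c)) ∧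
    Filter.Tendsto (fun x => ∫ t in a..x, genRAI F f α t / t)
      Filter.atTop Filter.atTop :=
  stmt_9_general α hα F f hmono hd hF hF0 hF1 a ha
end

section
/- Let α > 0 and β, λ > 0, and let X be a non-negative absolutely continuous random variable with cumulative distribution function F, differentiable on (0, +∞) with derivative f, satisfying 0 < F(x) < 1 for all x > 0 and lim_{x→0⁺} F(x) = 0. If the α-generalized reversed aging intensity function of X equals L̆_α(x) = (αβλ/x^β) · exp(−λα/x^β)/(1 − exp(−λα/x^β)) for every x ∈ (0, +∞), then X follows an inverse two-parameter Weibull distribution, i.e., F(x) = exp(−λ/x^β) for all x ∈ (0, +∞). -/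
open Filter Topology Set Real

theorem hasDerivAt_log_one_sub_rpow {F f : ℝ → ℝ} {α x : ℝ} (hF : HasDerivAt F (f x) x)
    (hα : α ≠ 0) (hx : x ≠ 0) (hFx : 0 < F x) (hFα : F x ^ α ≠ 1) :
    HasDerivAt (fun y => log (1 - F y ^ α)) (-genRAI F f α x / x) x := by
  have hinner : HasDerivAt (fun y => 1 - F y ^ α) (-(f x * α * F x ^ (α - 1))) x :=
    (hF.rpow_const (Or.inl hFx.ne')).const_sub 1
  refine (hinner.log (sub_ne_zero.2 hFα.symm)).congr_deriv ?_
  rw [genRAI, if_neg hα]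
  field_simp

theorem tendsto_log_one_sub_rpow {l : Filter ℝ} {F : ℝ → ℝ} {α : ℝ} (hα : 0 < α)
    (hF : Tendsto F l (𝓝 0)) : Tendsto (fun x => log (1 - F x ^ α)) l (𝓝 0) := by
  have hcont : ContinuousAt (fun y : ℝ => log (1 - y ^ α)) 0 :=
    ((continuousAt_const.sub (continuousAt_rpow_const 0 α (Or.inr hα.le))).log (by
      simp [zero_rpow hα.ne']))
  simpa [zero_rpow hα.ne', Function.comp_def] using hcont.tendsto.comp hF

theorem eqOn_of_genRAI_eq {F f G g : ℝ → ℝ} {α : ℝ} (hα : 0 < α)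
    (hF : ∀ x ∈ Ioi (0 : ℝ), HasDerivAt F (f x) x) (hFmem : ∀ x ∈ Ioi (0 : ℝ), F x ∈ Ioo 0 1)
    (hF0 : Tendsto F (𝓝[>] 0) (𝓝 0))
    (hG : ∀ x ∈ Ioi (0 : ℝ), HasDerivAt G (g x) x) (hGmem : ∀ x ∈ Ioi (0 : ℝ), G x ∈ Ioo 0 1)
    (hG0 : Tendsto G (𝓝[>] 0) (𝓝 0))
    (hL : ∀ x ∈ Ioi (0 : ℝ), genRAI F f α x = genRAI G g α x) :
    EqOn F G (Ioi 0) := by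
  have hderiv : ∀ {H h : ℝ → ℝ}, (∀ x ∈ Ioi (0 : ℝ), HasDerivAt H (h x) x) →
      (∀ x ∈ Ioi (0 : ℝ), H x ∈ Ioo 0 1) → ∀ x ∈ Ioi (0 : ℝ),
      HasDerivAt (fun y => log (1 - H y ^ α)) (-genRAI H h α x / x) x :=
    fun hH hHmem x hx => hasDerivAt_log_one_sub_rpow (hH x hx) hα.ne' (ne_of_gt hx)
      (hHmem x hx).1 (rpow_lt_one (hHmem x hx).1.le (hHmem x hx).2 hα).ne
  obtain ⟨a, ha⟩ := isOpen_Ioi.exists_eq_add_of_deriv_eq isPreconnected_Ioi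
    (fun x hx => (hderiv hF hFmem x hx).differentiableAt.differentiableWithinAt)
    (fun x hx => (hderiv hG hGmem x hx).differentiableAt.differentiableWithinAt)
    (fun x hx => by rw [(hderiv hF hFmem x hx).deriv, (hderiv hG hGmem x hx).deriv, hL x hx])
  have ha0 : a = 0 := by
    have hlimF := tendsto_log_one_sub_rpow hα hF0
    have hlimG := (tendsto_log_one_sub_rpow hα hG0).add_const a
    rw [zero_add] at hlimG
    refine tendsto_nhds_unique (hlimG.congr' ?_) hlimF
    exact eventually_nhdsWithin_of_forall fun x hx => (ha hx).symm
  intro x hx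
  have hone_sub_pos : ∀ {H : ℝ → ℝ}, H x ∈ Ioo 0 1 → 1 - H x ^ α ∈ Ioi 0 :=
    fun hH => sub_pos.2 (rpow_lt_one hH.1.le hH.2 hα)
  have hlog : log (1 - F x ^ α) = log (1 - G x ^ α) := by simpa [ha0] using ha hx
  have hrpow : F x ^ α = G x ^ α := by
    linarith [log_injOn_pos (hone_sub_pos (hFmem x hx)) (hone_sub_pos (hGmem x hx)) hlog]
  exact rpow_left_injOn hα.ne' (hFmem x hx).1.le (hGmem x hx).1.le hrpow

noncomputable def invWeibullCDF (β lam x : ℝ) : ℝ := exp (-lam / x ^ β)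

noncomputable def invWeibullPDF (β lam x : ℝ) : ℝ := β * lam / x ^ (β + 1) * invWeibullCDF β lam x

theorem hasDerivAt_invWeibullCDF {β lam x : ℝ} (hx : 0 < x) :
    HasDerivAt (invWeibullCDF β lam) (invWeibullPDF β lam x) x := by
  have hexponent : HasDerivAt (fun y => -lam / y ^ β)
      ((0 * x ^ β - -lam * (β * x ^ (β - 1))) / (x ^ β) ^ 2) x :=
    (hasDerivAt_const x (-lam)).div (hasDerivAt_rpow_const (Or.inl hx.ne'))
      (rpow_pos_of_pos hx β).ne'
  refine hexponent.exp.congr_deriv ?_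
  rw [invWeibullPDF, invWeibullCDF, rpow_add hx, rpow_sub_one hx.ne', rpow_one]
  field_simp
  ring

theorem invWeibullCDF_rpow (β lam α x : ℝ) :
    invWeibullCDF β lam x ^ α = exp (-(lam * α) / x ^ β) := by
  rw [invWeibullCDF, ← exp_mul]
  ring_nf

theorem invWeibullCDF_mem_Ioo {β lam x : ℝ} (hlam : 0 < lam) (hx : 0 < x) :
    invWeibullCDF β lam x ∈ Ioo 0 1 :=
  ⟨exp_pos _, exp_lt_one_iff.2
    (div_neg_of_neg_of_pos (neg_neg_of_pos hlam) (rpow_pos_of_pos hx β))⟩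

theorem tendsto_invWeibullCDF_nhdsGT_zero {β lam : ℝ} (hβ : 0 < β) (hlam : 0 < lam) :
    Tendsto (invWeibullCDF β lam) (𝓝[>] 0) (𝓝 0) := by
  have : Tendsto (fun x : ℝ => -lam * x ^ (-β)) (𝓝[>] 0) atBot :=
    (tendsto_rpow_neg_nhdsGT_zero (neg_neg_of_pos hβ)).const_mul_atTop_of_neg (neg_neg_of_pos hlam)
  refine tendsto_exp_atBot.comp (this.congr' (eventually_nhdsWithin_of_forall fun x hx => ?_))
  rw [rpow_neg (le_of_lt hx), ← div_eq_mul_inv]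

theorem genRAI_invWeibullCDF {α β lam x : ℝ} (hα : α ≠ 0) (hx : 0 < x) :
    genRAI (invWeibullCDF β lam) (invWeibullPDF β lam) α x =
      α * β * lam / x ^ β * (exp (-(lam * α) / x ^ β) / (1 - exp (-(lam * α) / x ^ β))) := by
  have hpos : 0 < invWeibullCDF β lam x := exp_pos _
  rw [genRAI, if_neg hα, invWeibullPDF, ← invWeibullCDF_rpow, rpow_add hx, rpow_one,
    rpow_sub_one hpos.ne']
  field_simp

theorem stmt_11_general (α β lam : ℝ) (hα : 0 < α) (hβ : 0 < β) (hlam : 0 < lam)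
    (F f : ℝ → ℝ)
    (hd : ∀ x ∈ Set.Ioi (0:ℝ), HasDerivAt F (f x) x)
    (hF : ∀ x ∈ Set.Ioi (0:ℝ), 0 < F x ∧ F x < 1)
    (hF0 : Filter.Tendsto F (nhdsWithin (0:ℝ) (Set.Ioi 0)) (nhds 0))
    (hL : ∀ x > (0:ℝ), genRAI F f α x =
      α * β * lam / x ^ β *
        (Real.exp (-(lam * α) / x ^ β) / (1 - Real.exp (-(lam * α) / x ^ β)))) :
    ∀ x > (0:ℝ), F x = Real.exp (-lam / x ^ β) :=
  fun _ hx => eqOn_of_genRAI_eq hα hd hF hF0 (fun _ hy => hasDerivAt_invWeibullCDF hy)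
    (fun _ hy => invWeibullCDF_mem_Ioo hlam hy) (tendsto_invWeibullCDF_nhdsGT_zero hβ hlam)
    (fun y hy => (hL y hy).trans (genRAI_invWeibullCDF hα.ne' hy).symm) hx

/-- For `α > 0` and `β, λ > 0`: if the α-generalized reversed aging intensity of `X`
is `L̆_α(x) = (αβλ/x^β) · exp(-λα/x^β)/(1 - exp(-λα/x^β))` on `(0,∞)`, then `X`
follows an inverse two-parameter Weibull distribution: `F(x) = exp(-λ/x^β)` for all
`x > 0`. -/
theorem stmt_11 (α β lam : ℝ) (hα : 0 < α) (hβ : 0 < β) (hlam : 0 < lam)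
    (F f : ℝ → ℝ)
    (hmono : Monotone F)
    (hd : ∀ x ∈ Set.Ioi (0:ℝ), HasDerivAt F (f x) x)
    (hF : ∀ x ∈ Set.Ioi (0:ℝ), 0 < F x ∧ F x < 1)
    (hfi : ∀ u v : ℝ, 0 < u → 0 < v → IntervalIntegrable f MeasureTheory.volume u v)
    (hF0 : Filter.Tendsto F (nhdsWithin (0:ℝ) (Set.Ioi 0)) (nhds 0))
    (hL : ∀ x > (0:ℝ), genRAI F f α x =
      α * β * lam / x ^ β *
        (Real.exp (-(lam * α) / x ^ β) / (1 - Real.exp (-(lam * α) / x ^ β)))) :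
    ∀ x > (0:ℝ), F x = Real.exp (-lam / x ^ β) :=
  stmt_11_general α β lam hα hβ hlam F f hd hF hF0 hL
end
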